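/- Let P, R be integers with 1 < R < P and 2 < P, and let (x_n) satisfy x_n = (P-R)x_{n-1} + (PR-2)x_{n-2} + (P-R)x_{n-3} - x_{n-4} for n ≥ 4. If the initial terms x_0 < x_1 < x_2 < x_3 are non-negative and strictly increasing, then the sequence (x_n) is strictly increasing. -/

import Mathlib

/-!
Each term exceeds its predecessor by
`(a - 1) x₍ₙ₊₃₎ + b x₍ₙ₊₂₎ + (c - 1) x₍ₙ₊₁₎ + (x₍ₙ₊₁₎ - x₍ₙ₎)`,
which is positive as soon as the four preceding terms are non-negative and increasing; so
"four consecutive terms are non-negative and strictly increasing" propagates along the sequence.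
-/

section FourTermRecurrence

variable {α : Type*} [CommRing α] [LinearOrder α] [IsStrictOrderedRing α] {a b c : α}

theorem lt_four_term_rec_step (ha : 1 ≤ a) (hb : 0 ≤ b) (hc : 1 ≤ c) {u₀ u₁ u₂ u₃ : α}
    (h₀ : 0 ≤ u₀) (h₀₁ : u₀ < u₁) (h₁₂ : u₁ ≤ u₂) (h₂₃ : u₂ ≤ u₃) :
    u₃ < a * u₃ + b * u₂ + c * u₁ - u₀ := by
  have hu₁ : u₁ ≤ c * u₁ := le_mul_of_one_le_left (by linarith) hc
  have hu₂ : 0 ≤ b * u₂ := mul_nonneg hb (by linarith)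
  have hu₃ : u₃ ≤ a * u₃ := le_mul_of_one_le_left (by linarith) ha
  linarith

theorem strictMono_of_four_term_rec (ha : 1 ≤ a) (hb : 0 ≤ b) (hc : 1 ≤ c) (x : ℕ → α)
    (hrec : ∀ n, x (n + 4) = a * x (n + 3) + b * x (n + 2) + c * x (n + 1) - x n)
    (h0 : 0 ≤ x 0) (h01 : x 0 < x 1) (h12 : x 1 < x 2) (h23 : x 2 < x 3) :
    StrictMono x := by
  have key : ∀ n, 0 ≤ x n ∧ x n < x (n + 1) ∧ x (n + 1) < x (n + 2) ∧ x (n + 2) < x (n + 3) := by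
    intro n
    induction n with
    | zero => exact ⟨h0, h01, h12, h23⟩
    | succ n ih =>
      obtain ⟨hn, hn₁, hn₂, hn₃⟩ := ih
      refine ⟨hn.trans hn₁.le, hn₂, hn₃, ?_⟩
      rw [hrec n]
      exact lt_four_term_rec_step ha hb hc hn hn₁ hn₂.le hn₃.le
  exact strictMono_nat_of_lt_succ fun n => (key n).2.1

end FourTermRecurrence

theorem rec_seq_strict_mono_general (P R : ℤ) (hR : 1 < R) (hRP : R < P)
    (x : ℕ → ℝ)
    (hrec : ∀ n, 4 ≤ n →
      x n = (P - R) * x (n-1) + (P*R - 2) * x (n-2) + (P - R) * x (n-3) - x (n-4))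
    (h0 : 0 ≤ x 0) (h01 : x 0 < x 1) (h12 : x 1 < x 2) (h23 : x 2 < x 3) :
    StrictMono x := by
  have hPR : (1 : ℝ) ≤ P - R := by
    have : 1 ≤ P - R := by omega
    exact_mod_cast this
  have hPR2 : (0 : ℝ) ≤ P * R - 2 := by
    have : 2 ≤ P * R := by nlinarith
    exact_mod_cast sub_nonneg.mpr this
  refine strictMono_of_four_term_rec hPR hPR2 hPR x (fun n => ?_) h0 h01 h12 h23
  simpa using hrec (n + 4) (by omega)

theorem rec_seq_strict_mono (P R : ℤ) (hR : 1 < R) (hRP : R < P) (hP : 2 < P)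
    (x : ℕ → ℝ)
    (hrec : ∀ n, 4 ≤ n →
      x n = (P - R) * x (n-1) + (P*R - 2) * x (n-2) + (P - R) * x (n-3) - x (n-4))
    (h0 : 0 ≤ x 0) (h01 : x 0 < x 1) (h12 : x 1 < x 2) (h23 : x 2 < x 3) :
    StrictMono x :=
  rec_seq_strict_mono_general P R hR hRP x hrec h0 h01 h12 h23
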